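/- arXiv:0807.5035 — 2 statements merged into one kernel-verified Lean document; each statement's English description precedes it below -/
import Mathlib

section
/- Let W be a real random variable. Then W has the standard normal distribution N(0,1) if and only if E[f′(W) − W f(W)] = 0 for every continuous, piecewise continuously differentiable function f with E|f′(X)| < ∞, where X ~ N(0,1). -/
open MeasureTheory ProbabilityTheory

/-- A function `f : ℝ → ℝ` is continuous and piecewise continuously
differentiable: it is continuous everywhere and, outside a finite set of
points, differentiable with continuous derivative. -/
def PiecewiseC1 (f : ℝ → ℝ) : Prop :=
  Continuous f ∧ ∃ S : Set ℝ, S.Finite ∧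
    ∀ x ∉ S, DifferentiableAt ℝ f x ∧ ContinuousAt (deriv f) x

/-!
If `W ~ N(0,1)` with density `φ`, then `E[f'(W) - W f(W)] = ∫ (φ f)'` because `φ' = -x φ`, and this
vanishes since `φ f` is integrable with integrable derivative, hence tends to `0` at `±∞`. (If
`x f(x)` is not integrable against `φ`, then neither is `f' - x f`, and the expectation is the
junk value `0`.)

Conversely, for bounded continuous `h` the Stein solution `f_h(x) = φ(x)⁻¹ ∫_{-∞}^x (h - E h(Z)) φ`
is `C¹` with `f_h' - x f_h = h - E h(Z)`. As `(h - E h(Z)) φ` has total integral `0`, the integral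
up to `x` is also minus the integral from `x` on, and the Mills-ratio bound `x ∫_x^∞ φ ≤ φ(x)` on
the appropriate tail gives `|x f_h(x)| ≤ 2‖h‖`. So `f_h'` is bounded, `f_h` is an admissible test
function, and the hypothesis says `E h(W) = E h(Z)` for every bounded continuous `h`, which
determines the law of `W`.
-/

open Set Filter Topology BoundedContinuousFunction

local notation "φ" => gaussianPDFReal 0 1

theorem integral_eq_zero_of_hasDerivAt_off_countable_of_integrable
    {E : Type*} [NormedAddCommGroup E] [NormedSpace ℝ E] [CompleteSpace E]
    {f f' : ℝ → E} {s : Set ℝ} (hs : s.Countable) (hf : Continuous f)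
    (hderiv : ∀ x ∉ s, HasDerivAt f (f' x) x) (hf' : Integrable f') (hfi : Integrable f) :
    ∫ x, f' x = 0 := by
  have ftc (a b : ℝ) : ∫ x in a..b, f' x = f b - f a :=
    integral_eq_of_hasDerivAt_off_countable f f' hs hf.continuousOn
      (fun x hx => hderiv x hx.2) hf'.intervalIntegrable
  have htop : Tendsto f atTop (𝓝 0) := by
    have h : Tendsto f atTop (𝓝 (f 0 + ∫ x in Ioi 0, f' x)) :=
      ((intervalIntegral_tendsto_integral_Ioi 0 hf'.integrableOn tendsto_id).const_add (f 0)).congr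
        fun b => by simp [ftc]
    convert h
    refine ((hfi.integrableAtFilter atTop).eq_zero_of_tendsto (fun t ht => ?_) h).symm
    obtain ⟨b, hb⟩ := mem_atTop_sets.1 ht
    exact top_unique ((Real.volume_Ici (a := b)).symm.trans_le (measure_mono hb))
  have hbot : Tendsto f atBot (𝓝 0) := by
    have h : Tendsto f atBot (𝓝 (f 0 - ∫ x in Iic 0, f' x)) :=
      ((intervalIntegral_tendsto_integral_Iic 0 hf'.integrableOn tendsto_id).const_sub (f 0)).congr
        fun a => by simp [ftc]
    convert h
    refine ((hfi.integrableAtFilter atBot).eq_zero_of_tendsto (fun t ht => ?_) h).symm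
    obtain ⟨b, hb⟩ := mem_atBot_sets.1 ht
    exact top_unique ((Real.volume_Iic (a := b)).symm.trans_le (measure_mono hb))
  refine tendsto_nhds_unique
    (intervalIntegral_tendsto_integral hf' tendsto_neg_atTop_atBot tendsto_id) ?_
  simpa [ftc] using htop.sub (hbot.comp tendsto_neg_atTop_atBot)

theorem integrable_of_integrable_id_mul {μ : Measure ℝ} [IsLocallyFiniteMeasure μ] {f : ℝ → ℝ}
    (hf : Continuous f) (hxf : Integrable (fun x => x * f x) μ) : Integrable f μ := by
  rw [← integrableOn_univ, ← union_compl_self (Icc (-1) 1), integrableOn_union]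
  refine ⟨hf.continuousOn.integrableOn_Icc,
    Integrable.mono hxf.integrableOn hf.aestronglyMeasurable ?_⟩
  refine (ae_restrict_iff' measurableSet_Icc.compl).2 (ae_of_all _ fun x hx => ?_)
  have : 1 ≤ |x| := by
    by_contra! h
    exact hx ⟨by linarith [neg_abs_le x], by linarith [le_abs_self x]⟩
  rw [Real.norm_eq_abs, Real.norm_eq_abs, abs_mul]
  exact le_mul_of_one_le_left (abs_nonneg _) this

theorem hasDerivAt_integral_Iic {E : Type*} [NormedAddCommGroup E] [NormedSpace ℝ E]
    [CompleteSpace E] {f : ℝ → E} (hf : Continuous f) (hfi : Integrable f) (x : ℝ) :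
    HasDerivAt (fun y => ∫ t in Iic y, f t) (f x) x := by
  have h (y : ℝ) : ∫ t in Iic y, f t = (∫ t in Iic 0, f t) + ∫ t in 0..y, f t := by
    rw [← intervalIntegral.integral_Iic_sub_Iic hfi.integrableOn hfi.integrableOn]
    abel
  rw [funext h]
  exact (intervalIntegral.integral_hasDerivAt_right hfi.intervalIntegrable
    hf.aestronglyMeasurable.stronglyMeasurableAtFilter hf.continuousAt).const_add _

namespace ProbabilityTheory

theorem hasDerivAt_gaussianPDFReal (μ : ℝ) (v : NNReal) (x : ℝ) :
    HasDerivAt (gaussianPDFReal μ v) (-((x - μ) / v) * gaussianPDFReal μ v x) x := by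
  have h : HasDerivAt (fun y => -(y - μ) ^ 2 / (2 * v)) (-((x - μ) / v)) x :=
    ((((hasDerivAt_id x).sub_const μ).pow 2).neg.div_const (2 * (v : ℝ))).congr_deriv (by
      simp only [id_eq, Nat.cast_ofNat]; ring)
  exact (h.exp.const_mul _).congr_deriv (by rw [gaussianPDFReal]; ring)

theorem continuous_gaussianPDFReal (μ : ℝ) (v : NNReal) : Continuous (gaussianPDFReal μ v) :=
  continuous_iff_continuousAt.2 fun x => (hasDerivAt_gaussianPDFReal μ v x).continuousAt

theorem integrable_gaussianReal_iff {E : Type*} [NormedAddCommGroup E] [NormedSpace ℝ E]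
    {μ : ℝ} {v : NNReal} (hv : v ≠ 0) {f : ℝ → E} :
    Integrable f (gaussianReal μ v) ↔ Integrable (fun x => gaussianPDFReal μ v x • f x) := by
  rw [gaussianReal_of_var_ne_zero _ hv, integrable_withDensity_iff_integrable_smul'
    (measurable_gaussianPDF _ _) (ae_of_all _ fun _ => gaussianPDF_lt_top)]
  simp [toReal_gaussianPDF]

theorem hasDerivAt_gaussianPDFReal_zero_one (x : ℝ) : HasDerivAt φ (-(x * φ x)) x := by
  simpa using hasDerivAt_gaussianPDFReal 0 1 x

theorem integrable_id_mul_gaussianPDFReal : Integrable fun x => x * φ x := by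
  have h := (memLp_id_gaussianReal (μ := 0) (v := 1) 1).integrable le_rfl
  rw [integrable_gaussianReal_iff one_ne_zero] at h
  simpa [mul_comm] using h

theorem tendsto_gaussianPDFReal_atTop : Tendsto φ atTop (𝓝 0) :=
  tendsto_zero_of_hasDerivAt_of_integrableOn_Ioi (a := 0)
    (fun x _ => hasDerivAt_gaussianPDFReal_zero_one x)
    integrable_id_mul_gaussianPDFReal.neg.integrableOn (integrable_gaussianPDFReal 0 1).integrableOn

theorem integral_Ioi_id_mul_gaussianPDFReal (x : ℝ) : ∫ t in Ioi x, t * φ t = φ x := by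
  have h := integral_Ioi_of_hasDerivAt_of_tendsto' (a := x) (f := fun t => -φ t)
    (fun t _ => (hasDerivAt_gaussianPDFReal_zero_one t).neg)
    integrable_id_mul_gaussianPDFReal.neg.neg.integrableOn tendsto_gaussianPDFReal_atTop.neg
  simpa using h

theorem mul_integral_Ioi_gaussianPDFReal_le (x : ℝ) :
    x * ∫ t in Ioi x, φ t ≤ φ x :=
  calc x * ∫ t in Ioi x, φ t = ∫ t in Ioi x, x * φ t := (integral_const_mul _ _).symm
    _ ≤ ∫ t in Ioi x, t * φ t :=
      setIntegral_mono_on ((integrable_gaussianPDFReal 0 1).const_mul x).integrableOn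
        integrable_id_mul_gaussianPDFReal.integrableOn measurableSet_Ioi
        fun t ht => mul_le_mul_of_nonneg_right (le_of_lt ht) (gaussianPDFReal_nonneg 0 1 t)
    _ = φ x := integral_Ioi_id_mul_gaussianPDFReal x

theorem gaussianPDFReal_zero_one_neg (x : ℝ) : φ (-x) = φ x := by
  simp [gaussianPDFReal]

theorem neg_mul_integral_Iic_gaussianPDFReal_le (x : ℝ) : -x * ∫ t in Iic x, φ t ≤ φ x := by
  have h : ∫ t in Iic x, φ t = ∫ t in Ioi (-x), φ t := by
    simpa [gaussianPDFReal_zero_one_neg] using (integral_comp_neg_Ioi (-x) φ).symm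
  simpa [h, gaussianPDFReal_zero_one_neg] using mul_integral_Ioi_gaussianPDFReal_le (-x)

theorem abs_mul_integral_Iic_le {ψ : ℝ → ℝ} {D : ℝ} (hψ : Integrable ψ) (hψ0 : ∫ t, ψ t = 0)
    (hD : ∀ t, |ψ t| ≤ D * φ t) (x : ℝ) : |x| * |∫ t in Iic x, ψ t| ≤ D * φ x := by
  have hD0 : 0 ≤ D :=
    nonneg_of_mul_nonneg_left ((abs_nonneg _).trans (hD 0)) (gaussianPDFReal_pos 0 1 0 one_ne_zero)
  have tail (s : Set ℝ) : |∫ t in s, ψ t| ≤ D * ∫ t in s, φ t :=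
    calc |∫ t in s, ψ t| ≤ ∫ t in s, |ψ t| := abs_integral_le_integral_abs
      _ ≤ ∫ t in s, D * φ t :=
        integral_mono hψ.abs.integrableOn
          ((integrable_gaussianPDFReal 0 1).const_mul D).integrableOn hD
      _ = D * ∫ t in s, φ t := integral_const_mul _ _
  rcases le_total x 0 with hx | hx
  · calc |x| * |∫ t in Iic x, ψ t| ≤ -x * (D * ∫ t in Iic x, φ t) := by
          rw [abs_of_nonpos hx]; gcongr; exacts [by linarith, tail _]
      _ = D * (-x * ∫ t in Iic x, φ t) := by ring
      _ ≤ D * φ x := by gcongr; exact neg_mul_integral_Iic_gaussianPDFReal_le x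
  · have hsplit : ∫ t in Iic x, ψ t = -∫ t in Ioi x, ψ t := by
      linarith [intervalIntegral.integral_Iic_add_Ioi hψ.integrableOn hψ.integrableOn (b := x)]
    calc |x| * |∫ t in Iic x, ψ t| ≤ x * (D * ∫ t in Ioi x, φ t) := by
          rw [abs_of_nonneg hx, hsplit, abs_neg]; gcongr; exact tail _
      _ = D * (x * ∫ t in Ioi x, φ t) := by ring
      _ ≤ D * φ x := by gcongr; exact mul_integral_Ioi_gaussianPDFReal_le x

noncomputable def steinSolution (h : ℝ →ᵇ ℝ) (x : ℝ) : ℝ :=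
  (∫ t in Iic x, (h t - ∫ s, h s ∂gaussianReal 0 1) * φ t) / φ x

section steinSolution

variable (h : ℝ →ᵇ ℝ)

theorem abs_sub_integral_gaussianReal_le (t : ℝ) :
    |h t - ∫ s, h s ∂gaussianReal 0 1| ≤ 2 * ‖h‖ :=
  calc |h t - ∫ s, h s ∂gaussianReal 0 1| ≤ |h t| + |∫ s, h s ∂gaussianReal 0 1| := abs_sub _ _
    _ ≤ ‖h‖ + ‖h‖ := add_le_add (h.norm_coe_le_norm t) (h.norm_integral_le_norm _)
    _ = 2 * ‖h‖ := by ring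

theorem abs_sub_integral_mul_gaussianPDFReal_le (t : ℝ) :
    |(h t - ∫ s, h s ∂gaussianReal 0 1) * φ t| ≤ 2 * ‖h‖ * φ t := by
  rw [abs_mul, abs_of_nonneg (gaussianPDFReal_nonneg 0 1 t)]
  exact mul_le_mul_of_nonneg_right (abs_sub_integral_gaussianReal_le h t)
    (gaussianPDFReal_nonneg 0 1 t)

theorem integrable_sub_integral_mul_gaussianPDFReal :
    Integrable fun t => (h t - ∫ s, h s ∂gaussianReal 0 1) * φ t :=
  ((integrable_gaussianPDFReal 0 1).const_mul (2 * ‖h‖)).mono'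
    ((h.continuous.sub continuous_const).mul
      (continuous_gaussianPDFReal 0 1)).aestronglyMeasurable
    (ae_of_all _ (abs_sub_integral_mul_gaussianPDFReal_le h))

theorem integral_sub_integral_mul_gaussianPDFReal_eq_zero :
    ∫ t, (h t - ∫ s, h s ∂gaussianReal 0 1) * φ t = 0 := by
  have h1 := integral_gaussianReal_eq_integral_smul (μ := 0) one_ne_zero
    (f := fun t => h t - ∫ s, h s ∂gaussianReal 0 1)
  rw [integral_sub (h.integrable _) (integrable_const _), integral_const] at h1
  simpa [mul_comm] using h1.symm

theorem hasDerivAt_steinSolution (x : ℝ) :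
    HasDerivAt (steinSolution h)
      (h x - ∫ s, h s ∂gaussianReal 0 1 + x * steinSolution h x) x := by
  have hφ := (gaussianPDFReal_pos 0 1 x one_ne_zero).ne'
  refine ((hasDerivAt_integral_Iic ((h.continuous.sub continuous_const).mul
    (continuous_gaussianPDFReal 0 1)) (integrable_sub_integral_mul_gaussianPDFReal h) x).div
    (hasDerivAt_gaussianPDFReal_zero_one x) hφ).congr_deriv ?_
  simp only [steinSolution, Pi.mul_apply, Pi.sub_apply]
  field_simp
  ring

theorem abs_mul_steinSolution_le (x : ℝ) : |x * steinSolution h x| ≤ 2 * ‖h‖ := by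
  have hφ := gaussianPDFReal_pos 0 1 x one_ne_zero
  rw [steinSolution, abs_mul, abs_div, abs_of_pos hφ, ← mul_div_assoc, div_le_iff₀ hφ]
  exact abs_mul_integral_Iic_le (integrable_sub_integral_mul_gaussianPDFReal h)
    (integral_sub_integral_mul_gaussianPDFReal_eq_zero h)
    (abs_sub_integral_mul_gaussianPDFReal_le h) x

theorem deriv_steinSolution :
    deriv (steinSolution h) = fun x => h x - ∫ s, h s ∂gaussianReal 0 1 + x * steinSolution h x :=
  funext fun x => (hasDerivAt_steinSolution h x).deriv

theorem continuous_steinSolution : Continuous (steinSolution h) :=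
  continuous_iff_continuousAt.2 fun x => (hasDerivAt_steinSolution h x).continuousAt

theorem piecewiseC1_steinSolution : PiecewiseC1 (steinSolution h) := by
  refine ⟨continuous_steinSolution h, ∅, finite_empty, fun x _ =>
    ⟨(hasDerivAt_steinSolution h x).differentiableAt, ?_⟩⟩
  rw [deriv_steinSolution]
  exact ((h.continuous.sub continuous_const).add
    (continuous_id.mul (continuous_steinSolution h))).continuousAt

theorem integrable_deriv_steinSolution :
    Integrable (deriv (steinSolution h)) (gaussianReal 0 1) := by
  refine (integrable_const (4 * ‖h‖)).mono' ?_ (ae_of_all _ fun x => ?_)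
  · rw [deriv_steinSolution]
    exact ((h.continuous.sub continuous_const).add
      (continuous_id.mul (continuous_steinSolution h))).aestronglyMeasurable
  · rw [deriv_steinSolution, Real.norm_eq_abs]
    linarith [abs_add_le (h x - ∫ s, h s ∂gaussianReal 0 1) (x * steinSolution h x),
      abs_sub_integral_gaussianReal_le h x, abs_mul_steinSolution_le h x]

end steinSolution

end ProbabilityTheory

theorem PiecewiseC1.integral_deriv_sub_id_mul_eq_zero {f : ℝ → ℝ} (hf : PiecewiseC1 f)
    (hf' : Integrable (deriv f) (gaussianReal 0 1)) :
    ∫ x, (deriv f x - x * f x) ∂gaussianReal 0 1 = 0 := by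
  obtain ⟨hc, S, hS, hd⟩ := hf
  by_cases hxf : Integrable (fun x => x * f x) (gaussianReal 0 1)
  swap
  · exact integral_undef fun h =>
      hxf ((hf'.sub h).congr (ae_of_all _ fun x => sub_sub_cancel _ _))
  rw [integral_gaussianReal_eq_integral_smul one_ne_zero]
  refine integral_eq_zero_of_hasDerivAt_off_countable_of_integrable (f := fun x => φ x * f x)
    hS.countable ((continuous_gaussianPDFReal 0 1).mul hc) (fun x hx => ?_)
    ((integrable_gaussianReal_iff one_ne_zero).1 (hf'.sub hxf))
    ((integrable_gaussianReal_iff one_ne_zero).1 (integrable_of_integrable_id_mul hc hxf))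
  exact ((hasDerivAt_gaussianPDFReal_zero_one x).mul (hd x hx).1.hasDerivAt).congr_deriv
    (by simp only [smul_eq_mul]; ring)

/-- Stein's lemma (characterization of the standard Gaussian): a real random
variable `W` is standard normal if and only if `E[f'(W) - W f(W)] = 0` for every
continuous, piecewise continuously differentiable `f` with `E|f'(X)| < ∞`,
where `X ~ N(0,1)`. -/
theorem stein_characterization
    {Ω : Type*} [MeasurableSpace Ω] (P : Measure Ω) [IsProbabilityMeasure P]
    (W : Ω → ℝ) (hW : Measurable W) :
    Measure.map W P = gaussianReal 0 1 ↔
      ∀ f : ℝ → ℝ, PiecewiseC1 f → Integrable (fun x => deriv f x) (gaussianReal 0 1) →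
        ∫ ω, (deriv f (W ω) - W ω * f (W ω)) ∂P = 0 := by
  constructor
  · intro hlaw f hf hf'
    rw [← integral_map (f := fun x => deriv f x - x * f x) hW.aemeasurable
      ((measurable_deriv f).sub (measurable_id.mul hf.1.measurable)).aestronglyMeasurable, hlaw]
    exact hf.integral_deriv_sub_id_mul_eq_zero hf'
  · intro hstein
    refine ext_of_forall_integral_eq_of_IsFiniteMeasure fun h => ?_
    have key := hstein _ (piecewiseC1_steinSolution h) (integrable_deriv_steinSolution h)
    simp only [deriv_steinSolution, add_sub_cancel_right] at key
    rw [integral_sub (f := fun ω => h (W ω)) ((h.integrable _).comp_measurable hW)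
      (integrable_const _), integral_const, probReal_univ, one_smul, sub_eq_zero] at key
    rw [integral_map hW.aemeasurable h.continuous.aestronglyMeasurable, key]
end

section
/- Let g ∈ L²(μ) and h ∈ L²_s(μ²) with h ⋆₁¹ h ∈ L²(μ²) and g ⋆₁¹ h ∈ L²(μ), where (g ⋆₁¹ h)(z) = ∫_Z g(x) h(x,z) μ(dx) and (h ⋆₁¹ h)(y,z) = ∫_Z h(x,y) h(x,z) μ(dx). Then ‖g ⋆₁¹ h‖_{L²(μ)} ≤ ‖g‖_{L²(μ)} · ‖h ⋆₁¹ h‖^{1/2}_{L²(μ²)}. -/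
open MeasureTheory ENNReal

/-! Expanding the square, applying Fubini and using the symmetry of `h` gives
`‖g ⋆₁¹ h‖² = ∫∫ g(x) g(y) (h ⋆₁¹ h)(x, y) μ(dx) μ(dy)`, the pairing of `g ⊗ g` with `h ⋆₁¹ h`
in `L²(μ²)`, so Cauchy–Schwarz and `‖g ⊗ g‖ = ‖g‖²` give the bound. Fubini applies because the
integrand `g(x) h(x,z) g(y) h(y,z)` is the product of the two `L²(μ³)` functions `g(x) h(y,z)` and
`g(y) h(x,z)`. -/

theorem ENNReal.le_mul_rpow_one_half_of_sq_le {a b c : ℝ≥0∞} (h : a ^ 2 ≤ b ^ 2 * c) :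
    a ≤ b * c ^ (1 / 2 : ℝ) := by
  have rpow_one_half_sq (x : ℝ≥0∞) : (x ^ 2) ^ (1 / 2 : ℝ) = x := by
    simpa using ENNReal.pow_rpow_inv_natCast (x := x) two_ne_zero
  calc a = (a ^ 2) ^ (1 / 2 : ℝ) := (rpow_one_half_sq a).symm
    _ ≤ (b ^ 2 * c) ^ (1 / 2 : ℝ) := ENNReal.rpow_le_rpow h (by norm_num)
    _ = b * c ^ (1 / 2 : ℝ) := by
        rw [ENNReal.mul_rpow_of_nonneg _ _ (by norm_num), rpow_one_half_sq]

namespace MeasureTheory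

section TensorProduct

variable {α β 𝕜 : Type*} [MeasurableSpace α] [MeasurableSpace β] {μ : Measure α} {ν : Measure β}
  [SFinite ν] [NormedRing 𝕜] [NormMulClass 𝕜] {f : α → 𝕜} {g : β → 𝕜} {p : ℝ≥0∞}

theorem eLpNorm_mul_prod (hf : AEStronglyMeasurable f μ) (hg : AEStronglyMeasurable g ν)
    (hp : p ≠ ∞) :
    eLpNorm (fun z : α × β => f z.1 * g z.2) p (μ.prod ν) = eLpNorm f p μ * eLpNorm g p ν := by
  rcases eq_or_ne p 0 with rfl | hp0
  · simp
  simp_rw [eLpNorm_eq_lintegral_rpow_enorm_toReal hp0 hp, enorm_mul,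
    ENNReal.mul_rpow_of_nonneg _ _ toReal_nonneg]
  rw [lintegral_prod_mul (hf.enorm.pow_const _) (hg.enorm.pow_const _),
    ENNReal.mul_rpow_of_nonneg _ _ (by positivity)]

theorem MemLp.mul_prod (hf : MemLp f p μ) (hg : MemLp g p ν) (hp : p ≠ ∞) :
    MemLp (fun z : α × β => f z.1 * g z.2) p (μ.prod ν) :=
  ⟨hf.1.comp_fst.mul hg.1.comp_snd, by
    rw [eLpNorm_mul_prod hf.1 hg.1 hp]
    exact ENNReal.mul_lt_top hf.2 hg.2⟩

end TensorProduct

theorem MemLp.eLpNorm_two_sq {α H : Type*} [MeasurableSpace α] {μ : Measure α}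
    [NormedAddCommGroup H] {f : α → H} (hf : MemLp f 2 μ) :
    eLpNorm f 2 μ ^ 2 = ENNReal.ofReal (∫ a, ‖f a‖ ^ 2 ∂μ) := by
  rw [hf.eLpNorm_eq_integral_rpow_norm two_ne_zero ofNat_ne_top,
    ← ENNReal.ofReal_pow (by positivity), ← Real.rpow_natCast, ← Real.rpow_mul (by positivity)]
  norm_num

theorem ofReal_integral_mul_le_eLpNorm_mul_eLpNorm {α : Type*} [MeasurableSpace α]
    {μ : Measure α} {f g : α → ℝ} (hf : AEStronglyMeasurable f μ)
    (hg : AEStronglyMeasurable g μ) :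
    ENNReal.ofReal (∫ a, f a * g a ∂μ) ≤ eLpNorm f 2 μ * eLpNorm g 2 μ :=
  calc ENNReal.ofReal (∫ a, f a * g a ∂μ)
      ≤ ‖∫ a, f a * g a ∂μ‖ₑ := Real.ofReal_le_enorm _
    _ ≤ eLpNorm (f • g) 1 μ := by
        rw [eLpNorm_one_eq_lintegral_enorm]
        exact enorm_integral_le_lintegral_enorm _
    _ ≤ eLpNorm f 2 μ * eLpNorm g 2 μ := eLpNorm_smul_le_mul_eLpNorm hg hf

section Contraction

variable {X Y : Type*} [MeasurableSpace X] [MeasurableSpace Y] {μ : Measure X} {ν : Measure Y}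
  [SFinite μ] [SFinite ν] {g : X → ℝ} {h : X × Y → ℝ}

theorem integrable_mul_mul_of_memLp_two (hg : MemLp g 2 μ) (hh : MemLp h 2 (μ.prod ν)) :
    Integrable (fun q : (X × X) × Y => g q.1.1 * h (q.1.1, q.2) * (g q.1.2 * h (q.1.2, q.2)))
      ((μ.prod μ).prod ν) := by
  have hA : MemLp (fun q : (X × X) × Y => g q.1.1 * h (q.1.2, q.2)) 2 ((μ.prod μ).prod ν) :=
    (hg.mul_prod hh ofNat_ne_top).comp_measurePreserving (measurePreserving_prodAssoc μ μ ν)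
  have hB : MemLp (fun q : (X × X) × Y => g q.1.2 * h (q.1.1, q.2)) 2 ((μ.prod μ).prod ν) :=
    hA.comp_measurePreserving (Measure.measurePreserving_swap.prod (MeasurePreserving.id ν))
  refine (hA.integrable_mul hB).congr (ae_of_all _ fun q => ?_)
  simp only [Pi.mul_apply]
  ring

theorem integral_sq_integral_mul (hg : MemLp g 2 μ) (hh : MemLp h 2 (μ.prod ν)) :
    ∫ y, (∫ x, g x * h (x, y) ∂μ) ^ 2 ∂ν
      = ∫ p : X × X, g p.1 * g p.2 * ∫ y, h (p.1, y) * h (p.2, y) ∂ν ∂(μ.prod μ) :=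
  calc ∫ y, (∫ x, g x * h (x, y) ∂μ) ^ 2 ∂ν
      = ∫ y, ∫ p : X × X, g p.1 * h (p.1, y) * (g p.2 * h (p.2, y)) ∂(μ.prod μ) ∂ν := by
        simp_rw [sq, ← integral_prod_mul]
    _ = ∫ p : X × X, ∫ y, g p.1 * h (p.1, y) * (g p.2 * h (p.2, y)) ∂ν ∂(μ.prod μ) :=
        (integral_integral_swap (integrable_mul_mul_of_memLp_two hg hh)).symm
    _ = ∫ p : X × X, g p.1 * g p.2 * ∫ y, h (p.1, y) * h (p.2, y) ∂ν ∂(μ.prod μ) := by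
        simp_rw [← integral_const_mul, mul_mul_mul_comm]

theorem eLpNorm_integral_mul_sq_le (hg : MemLp g 2 μ) (hh : MemLp h 2 (μ.prod ν))
    (hT : MemLp (fun y => ∫ x, g x * h (x, y) ∂μ) 2 ν)
    (hK : AEStronglyMeasurable (fun p : X × X => ∫ y, h (p.1, y) * h (p.2, y) ∂ν) (μ.prod μ)) :
    eLpNorm (fun y => ∫ x, g x * h (x, y) ∂μ) 2 ν ^ 2
      ≤ eLpNorm g 2 μ ^ 2
        * eLpNorm (fun p : X × X => ∫ y, h (p.1, y) * h (p.2, y) ∂ν) 2 (μ.prod μ) :=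
  calc eLpNorm (fun y => ∫ x, g x * h (x, y) ∂μ) 2 ν ^ 2
      = ENNReal.ofReal (∫ y, (∫ x, g x * h (x, y) ∂μ) ^ 2 ∂ν) := by
        simp only [hT.eLpNorm_two_sq, Real.norm_eq_abs, sq_abs]
    _ = ENNReal.ofReal
          (∫ p : X × X, g p.1 * g p.2 * ∫ y, h (p.1, y) * h (p.2, y) ∂ν ∂(μ.prod μ)) := by
        rw [integral_sq_integral_mul hg hh]
    _ ≤ eLpNorm (fun p : X × X => g p.1 * g p.2) 2 (μ.prod μ)
          * eLpNorm (fun p : X × X => ∫ y, h (p.1, y) * h (p.2, y) ∂ν) 2 (μ.prod μ) :=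
        ofReal_integral_mul_le_eLpNorm_mul_eLpNorm (hg.1.comp_fst.mul hg.1.comp_snd) hK
    _ = eLpNorm g 2 μ ^ 2
          * eLpNorm (fun p : X × X => ∫ y, h (p.1, y) * h (p.2, y) ∂ν) 2 (μ.prod μ) := by
        rw [eLpNorm_mul_prod hg.1 hg.1 ofNat_ne_top, sq]

end Contraction

end MeasureTheory

theorem contraction_cauchy_schwarz_general
    {Z : Type*} [MeasurableSpace Z] (μ : Measure Z) [SigmaFinite μ]
    (g : Z → ℝ) (h : Z × Z → ℝ)
    (hhsym : ∀ x y : Z, h (x, y) = h (y, x))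
    (hg2 : MemLp g 2 μ) (hh2 : MemLp h 2 (μ.prod μ))
    (hgh : MemLp (fun z => ∫ x, g x * h (x, z) ∂μ) 2 μ)
    (hhh : MemLp (fun yz : Z × Z => ∫ x, h (x, yz.1) * h (x, yz.2) ∂μ) 2 (μ.prod μ)) :
    eLpNorm (fun z => ∫ x, g x * h (x, z) ∂μ) 2 μ
      ≤ eLpNorm g 2 μ *
        (eLpNorm (fun yz : Z × Z => ∫ x, h (x, yz.1) * h (x, yz.2) ∂μ) 2 (μ.prod μ))
          ^ (1 / 2 : ℝ) := by
  have h_flip : (fun yz : Z × Z => ∫ x, h (x, yz.1) * h (x, yz.2) ∂μ)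
      = fun p => ∫ x, h (p.1, x) * h (p.2, x) ∂μ := by
    simp only [hhsym _ (Prod.fst _), hhsym _ (Prod.snd _)]
  rw [h_flip] at hhh ⊢
  exact ENNReal.le_mul_rpow_one_half_of_sq_le (eLpNorm_integral_mul_sq_le hg2 hh2 hgh hhh.1)

/-- Inequality (6.2): `‖g ⋆₁¹ h‖_{L²(μ)} ≤ ‖g‖_{L²(μ)} · ‖h ⋆₁¹ h‖_{L²(μ²)}^{1/2}`,
where `(g ⋆₁¹ h)(z) = ∫ g(x) h(x,z) μ(dx)` and
`(h ⋆₁¹ h)(y,z) = ∫ h(x,y) h(x,z) μ(dx)`. -/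
theorem contraction_cauchy_schwarz
    {Z : Type*} [MeasurableSpace Z] (μ : Measure Z) [SigmaFinite μ]
    (g : Z → ℝ) (h : Z × Z → ℝ)
    (hgm : Measurable g) (hhm : Measurable h)
    (hhsym : ∀ x y : Z, h (x, y) = h (y, x))
    (hg2 : MemLp g 2 μ) (hh2 : MemLp h 2 (μ.prod μ))
    (hgh : MemLp (fun z => ∫ x, g x * h (x, z) ∂μ) 2 μ)
    (hhh : MemLp (fun yz : Z × Z => ∫ x, h (x, yz.1) * h (x, yz.2) ∂μ) 2 (μ.prod μ)) :
    eLpNorm (fun z => ∫ x, g x * h (x, z) ∂μ) 2 μ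
      ≤ eLpNorm g 2 μ *
        (eLpNorm (fun yz : Z × Z => ∫ x, h (x, yz.1) * h (x, yz.2) ∂μ) 2 (μ.prod μ))
          ^ (1 / 2 : ℝ) :=
  contraction_cauchy_schwarz_general μ g h hhsym hg2 hh2 hgh hhh
end
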